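/- arXiv:2110.11627 — 7 statements merged into one kernel-verified Lean document; each statement's English description precedes it below -/
import Mathlib

section
/- Let ω be a finite Borel measure on ℝ supported in [0, ∞). Define ω' as the measure ω' = ½·(pushforward of ω under λ ↦ √λ) + ½·(pushforward of ω under λ ↦ −√λ). Then ω'(ℝ) = ω(ℝ), and for every z ∈ ℂ with Im z ≠ 0 one has z·∫ 1/(λ − z²) dω(λ) = ∫ 1/(t − z) dω'(t). -/
/-!
For `λ ≥ 0` write `s = √λ`; then `z / (λ - z²) = ½ (1 / (s - z) + 1 / (-s - z))`, the partial
fraction decomposition of `z / (s² - z²)`. Integrating this identity against `ω` gives the Stieltjes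
transform of `ω'`, since the right-hand side is exactly the integral of `1 / (t - z)` against the
two halves of `ω'`. The mass identity is `½ + ½ = 1`.
-/

open MeasureTheory
open scoped ENNReal

namespace Complex

lemma ofReal_sub_ne_zero_of_im_ne_zero {z : ℂ} (hz : z.im ≠ 0) (t : ℝ) : (t : ℂ) - z ≠ 0 := by
  intro h
  exact hz (by simpa using (congrArg Complex.im h).symm)

lemma norm_one_div_ofReal_sub_le {z : ℂ} (hz : z.im ≠ 0) (t : ℝ) :
    ‖1 / ((t : ℂ) - z)‖ ≤ |z.im|⁻¹ := by
  rw [norm_div, norm_one, one_div]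
  refine inv_anti₀ (abs_pos.2 hz) ?_
  calc |z.im| = |((t : ℂ) - z).im| := by simp
    _ ≤ ‖(t : ℂ) - z‖ := abs_im_le_norm _

end Complex

lemma integrable_one_div_ofReal_sub {μ : Measure ℝ} [IsFiniteMeasure μ] {z : ℂ} (hz : z.im ≠ 0) :
    Integrable (fun t : ℝ => 1 / ((t : ℂ) - z)) μ :=
  (integrable_const |z.im|⁻¹).mono'
    (by fun_prop : Measurable fun t : ℝ => 1 / ((t : ℂ) - z)).aestronglyMeasurable
    (.of_forall (Complex.norm_one_div_ofReal_sub_le hz))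

lemma mul_one_div_sq_sub_sq {K : Type*} [Field K] [NeZero (2 : K)] {s z : K}
    (h₁ : s - z ≠ 0) (h₂ : -s - z ≠ 0) :
    z * (1 / (s ^ 2 - z ^ 2)) = 2⁻¹ * (1 / (s - z) + 1 / (-s - z)) := by
  have h₃ : s ^ 2 - z ^ 2 ≠ 0 := by
    rw [show s ^ 2 - z ^ 2 = -((s - z) * (-s - z)) by ring]
    exact neg_ne_zero.2 (mul_ne_zero h₁ h₂)
  field_simp
  ring

lemma integral_smul_map_add_smul_map {α β E : Type*} [MeasurableSpace α] [MeasurableSpace β]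
    [NormedAddCommGroup E] [NormedSpace ℝ E] {μ : Measure α} {g h : α → β}
    (hg : Measurable g) (hh : Measurable h) {f : β → E} (hf : StronglyMeasurable f)
    (hfg : Integrable f (μ.map g)) (hfh : Integrable f (μ.map h)) {c : ℝ≥0∞} (hc : c ≠ ∞) :
    ∫ y, f y ∂(c • μ.map g + c • μ.map h) = c.toReal • ∫ x, (f (g x) + f (h x)) ∂μ := by
  rw [integral_add_measure (hfg.smul_measure hc) (hfh.smul_measure hc), integral_smul_measure,
    integral_smul_measure, integral_map hg.aemeasurable hf.aestronglyMeasurable,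
    integral_map hh.aemeasurable hf.aestronglyMeasurable, ← smul_add]
  exact congrArg _ (integral_add (hfg.comp_measurable hg) (hfh.comp_measurable hh)).symm

/-- Let `ω` be a finite Borel measure on `ℝ` supported in `[0, ∞)`, and let
`ω' = ½·(pushforward of ω by √·) + ½·(pushforward of ω by −√·)`. Then `ω'(ℝ) = ω(ℝ)` and for
every `z ∈ ℂ` with `Im z ≠ 0`, `z·∫ 1/(λ − z²) dω(λ) = ∫ 1/(t − z) dω'(t)`. -/
theorem stmt2 (ω : Measure ℝ) [IsFiniteMeasure ω] (hsupp : ω (Set.Iio 0) = 0)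
    (ω' : Measure ℝ)
    (hω' : ω' = (2⁻¹ : ℝ≥0∞) • Measure.map (fun l : ℝ => Real.sqrt l) ω +
        (2⁻¹ : ℝ≥0∞) • Measure.map (fun l : ℝ => -Real.sqrt l) ω) :
    ω' Set.univ = ω Set.univ ∧
    ∀ z : ℂ, z.im ≠ 0 →
      z * ∫ l : ℝ, 1 / ((l : ℂ) - z ^ 2) ∂ω = ∫ t : ℝ, 1 / ((t : ℂ) - z) ∂ω' := by
  have hsqrt : Measurable fun l : ℝ => Real.sqrt l := Real.continuous_sqrt.measurable
  have hneg_sqrt : Measurable fun l : ℝ => -Real.sqrt l := hsqrt.neg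
  subst hω'
  refine ⟨?_, fun z hz => ?_⟩
  · simp only [Measure.add_apply, Measure.smul_apply, Measure.map_apply hsqrt MeasurableSet.univ,
      Measure.map_apply hneg_sqrt MeasurableSet.univ, Set.preimage_univ, smul_eq_mul, ← add_mul,
      ENNReal.inv_two_add_inv_two, one_mul]
  have hnonneg : ∀ᵐ l ∂ω, 0 ≤ l := ae_iff.2 (by simpa [not_le, Set.Iio] using hsupp)
  rw [integral_smul_map_add_smul_map hsqrt hneg_sqrt (by fun_prop : Measurable _).stronglyMeasurable
    (integrable_one_div_ofReal_sub hz) (integrable_one_div_ofReal_sub hz) (by simp),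
    ← integral_const_mul, ← integral_smul]
  refine integral_congr_ae (hnonneg.mono fun l hl => ?_)
  have hsq : (Real.sqrt l : ℂ) ^ 2 = l := by
    rw [← Complex.ofReal_pow, Real.sq_sqrt hl]
  have hneg := Complex.ofReal_sub_ne_zero_of_im_ne_zero hz (-Real.sqrt l)
  push_cast at hneg ⊢
  rw [← hsq, mul_one_div_sq_sub_sq (Complex.ofReal_sub_ne_zero_of_im_ne_zero hz _) hneg,
    Complex.real_smul]
  norm_num
end

section
/- Let P, K ≥ 1, let A be a P×P and B a P×K complex matrix. Assume (i) every eigenvalue of A has modulus strictly less than 1, and (ii) the P×(K·P) block matrix (B, AB, A²B, …, A^{P−1}B) has rank P. Then the series ∑_{k=0}^{∞} A^k·B·Bᴴ·(Aᴴ)^k converges and its sum is a Hermitian positive definite P×P matrix. -/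
/-!
By Gelfand's formula, `‖A ^ k‖` decays geometrically when the spectral radius of `A` is below
one, and in the `L²` operator norm `‖(Aᴴ) ^ k‖ = ‖A ^ k‖`, so the series converges. Its terms are
`(A ^ k B)(A ^ k B)ᴴ ⪰ 0`, and the first `P` of them add up to `C Cᴴ`, where `C` is the
commandability matrix; `C Cᴴ` is positive definite because `C` has rank `P`, and the remaining
tail is positive semidefinite.
-/

open Matrix Filter
open scoped ComplexOrder NNReal

section SpectralRadius

variable {A : Type*} [NormedRing A] [NormedAlgebra ℂ A] [CompleteSpace A]

theorem spectralRadius_lt_one_of_forall_mem_spectrum {a : A}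
    (h : ∀ μ ∈ spectrum ℂ a, ‖μ‖ < 1) : spectralRadius ℂ a < 1 := by
  rcases (spectrum ℂ a).eq_empty_or_nonempty with hempty | hne
  · simp [spectralRadius, hempty]
  · exact_mod_cast spectrum.spectralRadius_lt_of_forall_lt_of_nonempty hne (r := 1)
      fun μ hμ => by exact_mod_cast h μ hμ

theorem exists_lt_one_eventually_norm_pow_le {a : A} (h : spectralRadius ℂ a < 1) :
    ∃ r : ℝ, 0 ≤ r ∧ r < 1 ∧ ∀ᶠ k : ℕ in atTop, ‖a ^ k‖ ≤ r ^ k := by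
  obtain ⟨r, hρr, hr1⟩ := exists_between h
  lift r to ℝ≥0 using (hr1.trans ENNReal.one_lt_top).ne
  refine ⟨r, r.coe_nonneg, by exact_mod_cast hr1, ?_⟩
  filter_upwards [(spectrum.pow_nnnorm_pow_one_div_tendsto_nhds_spectralRadius a).eventually_lt_const
    hρr, eventually_ge_atTop 1] with k hk hk1
  have hk0 : (k : ℝ) ≠ 0 := by positivity
  have := ENNReal.rpow_le_rpow hk.le (Nat.cast_nonneg k : (0 : ℝ) ≤ k)
  rw [← ENNReal.rpow_mul, one_div, inv_mul_cancel₀ hk0, ENNReal.rpow_one,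
    ENNReal.rpow_natCast] at this
  exact_mod_cast this

theorem summable_pow_mul_mul_star_pow [StarRing A] [CStarRing A] {a : A}
    (h : spectralRadius ℂ a < 1) (c : A) :
    Summable fun k : ℕ => a ^ k * c * star a ^ k := by
  obtain ⟨r, hr0, hr1, hr⟩ := exists_lt_one_eventually_norm_pow_le h
  refine Summable.of_norm_bounded_eventually_nat (g := fun k => ‖c‖ * (r * r) ^ k)
    ((summable_geometric_of_lt_one (by positivity) (by nlinarith)).mul_left ‖c‖) ?_
  filter_upwards [hr] with k hk
  calc ‖a ^ k * c * star a ^ k‖ ≤ ‖a ^ k‖ * ‖c‖ * ‖a ^ k‖ :=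
        norm_mul₃_le.trans_eq (by rw [← star_pow, norm_star])
    _ ≤ r ^ k * ‖c‖ * r ^ k := by gcongr
    _ = ‖c‖ * (r * r) ^ k := by ring

end SpectralRadius

namespace Matrix

variable {m n ι : Type*} [Fintype n]

theorem PosSemidef.tsum {𝕜 : Type*} [RCLike 𝕜] {f : ι → Matrix n n 𝕜} (hf : Summable f)
    (hpos : ∀ i, (f i).PosSemidef) : (∑' i, f i).PosSemidef := by
  refine .of_dotProduct_mulVec_nonneg ?_ fun x => ?_
  · rw [IsHermitian, conjTranspose_tsum]
    exact tsum_congr fun i => (hpos i).isHermitian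
  · let q : Matrix n n 𝕜 →+ 𝕜 :=
      { toFun M := star x ⬝ᵥ (M *ᵥ x)
        map_zero' := by simp
        map_add' M N := by simp [add_mulVec, dotProduct_add] }
    have hq : Continuous q :=
      continuous_const.dotProduct (continuous_id.matrix_mulVec continuous_const)
    change 0 ≤ q (∑' i, f i)
    rw [← (hf.hasSum.map q hq).tsum_eq]
    exact tsum_nonneg fun i => (hpos i).dotProduct_mulVec_nonneg x

theorem of_prod_mul_conjTranspose {R : Type*} [Semiring R] [StarRing R] [Fintype ι]
    (M : ι → Matrix m n R) :
    (of fun p (ij : ι × n) => M ij.1 p ij.2) * (of fun p (ij : ι × n) => M ij.1 p ij.2)ᴴ =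
      ∑ i, M i * (M i)ᴴ := by
  ext p q
  simp [mul_apply, Fintype.sum_prod_type, sum_apply]

theorem vecMul_injective_of_rank_eq_card {K : Type*} [Field K] [Fintype m] {C : Matrix m n K}
    (h : C.rank = Fintype.card m) : Function.Injective C.vecMul := by
  rw [vecMul_injective_iff, linearIndependent_iff_card_eq_finrank_span]
  simpa [Set.finrank, ← C.rank_eq_finrank_span_row] using h.symm

open scoped Matrix.Norms.L2Operator in
theorem summable_pow_mul_mul_conjTranspose_pow [DecidableEq n] {A : Matrix n n ℂ}
    (hA : ∀ μ ∈ spectrum ℂ A, ‖μ‖ < 1) (C : Matrix n n ℂ) :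
    Summable fun k : ℕ => A ^ k * C * Aᴴ ^ k :=
  summable_pow_mul_mul_star_pow (spectralRadius_lt_one_of_forall_mem_spectrum hA) C

end Matrix

theorem stmt6_general (P K : ℕ)
    (A : Matrix (Fin P) (Fin P) ℂ) (B : Matrix (Fin P) (Fin K) ℂ)
    (hspec : ∀ μ : ℂ, ¬ IsUnit (A - μ • (1 : Matrix (Fin P) (Fin P) ℂ)) → ‖μ‖ < 1)
    (hrank : (Matrix.of fun (p : Fin P) (jk : Fin P × Fin K) =>
        (A ^ (jk.1 : ℕ) * B) p jk.2).rank = P) :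
    Summable (fun k : ℕ => A ^ k * B * Bᴴ * Aᴴ ^ k) ∧
    Matrix.PosDef (∑' k : ℕ, A ^ k * B * Bᴴ * Aᴴ ^ k) := by
  have hσ : ∀ μ ∈ spectrum ℂ A, ‖μ‖ < 1 := fun μ hμ => hspec μ fun hunit =>
    spectrum.mem_iff.mp hμ (by simpa [Algebra.algebraMap_eq_smul_one] using hunit.neg)
  have hsum : Summable fun k : ℕ => A ^ k * B * Bᴴ * Aᴴ ^ k := by
    simpa only [Matrix.mul_assoc] using summable_pow_mul_mul_conjTranspose_pow hσ (B * Bᴴ)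
  have hterm : ∀ k : ℕ, A ^ k * B * Bᴴ * Aᴴ ^ k = (A ^ k * B) * (A ^ k * B)ᴴ := fun k => by
    rw [conjTranspose_mul, conjTranspose_pow, Matrix.mul_assoc]
  refine ⟨hsum, ?_⟩
  rw [← hsum.sum_add_tsum_nat_add P,
    ← Fin.sum_univ_eq_sum_range (fun k => A ^ k * B * Bᴴ * Aᴴ ^ k)]
  have htail : (∑' k : ℕ, A ^ (k + P) * B * Bᴴ * Aᴴ ^ (k + P)).PosSemidef :=
    PosSemidef.tsum (hsum.comp_injective (add_left_injective P))
      fun k => hterm (k + P) ▸ posSemidef_self_mul_conjTranspose _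
  refine PosDef.add_posSemidef ?_ htail
  simp only [hterm, ← of_prod_mul_conjTranspose]
  exact PosDef.mul_conjTranspose_self _ (vecMul_injective_of_rank_eq_card (by simpa using hrank))

/-- Let `A` be a `P×P` and `B` a `P×K` complex matrix. If every eigenvalue of
`A` has modulus `< 1` and the commandability matrix `(B, AB, …, A^{P−1}B)` has rank `P`, then
the series `∑_{k} A^k B Bᴴ (Aᴴ)^k` converges and its sum is Hermitian positive definite. -/
theorem stmt6 (P K : ℕ) (hP : 1 ≤ P) (hK : 1 ≤ K)
    (A : Matrix (Fin P) (Fin P) ℂ) (B : Matrix (Fin P) (Fin K) ℂ)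
    (hspec : ∀ μ : ℂ, ¬ IsUnit (A - μ • (1 : Matrix (Fin P) (Fin P) ℂ)) → ‖μ‖ < 1)
    (hrank : (Matrix.of fun (p : Fin P) (jk : Fin P × Fin K) =>
        (A ^ (jk.1 : ℕ) * B) p jk.2).rank = P) :
    Summable (fun k : ℕ => A ^ k * B * Bᴴ * Aᴴ ^ k) ∧
    Matrix.PosDef (∑' k : ℕ, A ^ k * B * Bᴴ * Aᴴ ^ k) :=
  stmt6_general P K A B hspec hrank
end

section
/- Let r ≥ 1, let Δ be an r×r Hermitian positive definite complex matrix, let Γ be an r×r complex matrix such that the spectral norm of Δ⁻¹·Γ·Δ⁻¹ is at most 1, and let t ∈ ℂ with Im t > 0. Then the Hermitian 2r×2r block matrix [[Im(t)·(1+|t|²)·Δ², Im(t²)·Γᴴ], [Im(t²)·Γ, Im(t)·(1+|t|²)·Δ²]] is positive definite. -/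
open Matrix
open scoped ComplexOrder

/-!
Write `Γ = Δ T Δ` with `T = Δ⁻¹ Γ Δ⁻¹`, so `‖T‖ ≤ 1`. Conjugating by `diag(Δ, Δ)` reduces the
claim to positive definiteness of `[[a, b Tᴴ], [b T, a]]` with `a = Im t (1 + |t|²)` and
`b = Im t²`. This matrix is `(a - |b|) I` plus `[[|b|, (bT)ᴴ], [bT, |b|]]`, and the latter is
positive semidefinite by a Schur complement argument because `‖bT‖ ≤ |b|`. Finally `|b| < a`,
since `a - |b| = Im t ((|Re t| - 1)² + (Im t)²)`.
-/

lemma Complex.abs_im_sq_lt_im_mul_one_add_norm_sq {t : ℂ} (ht : 0 < t.im) :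
    |(t ^ 2).im| < t.im * (1 + ‖t‖ ^ 2) := by
  have him : |(t ^ 2).im| = 2 * |t.re| * t.im := by
    rw [sq, Complex.mul_im, mul_comm t.im, ← two_mul, abs_mul, abs_mul, abs_two, abs_of_pos ht,
      mul_assoc]
  rw [him, Complex.sq_norm, Complex.normSq_apply, ← abs_mul_abs_self t.re]
  nlinarith [mul_pos ht (add_pos_of_nonneg_of_pos (sq_nonneg (|t.re| - 1)) (pow_pos ht 2))]

namespace Matrix

section Blocks

variable {m n R : Type*} [Fintype m] [Fintype n] [Semiring R] [StarRing R]

lemma conjTranspose_fromBlocks_diagonal_mul_mul (P : Matrix m m R) (Q : Matrix n n R)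
    (A : Matrix m m R) (B : Matrix m n R) (C : Matrix n m R) (D : Matrix n n R) :
    (fromBlocks P 0 0 Q)ᴴ * fromBlocks A B C D * fromBlocks P 0 0 Q =
      fromBlocks (Pᴴ * A * P) (Pᴴ * B * Q) (Qᴴ * C * P) (Qᴴ * D * Q) := by
  simp [fromBlocks_conjTranspose, fromBlocks_multiply]

end Blocks

variable {𝕜 n : Type*} [RCLike 𝕜] [Fintype n] [DecidableEq n]

omit [DecidableEq n] in
lemma dotProduct_star_self_eq_norm_toLp_sq (x : n → 𝕜) :
    star x ⬝ᵥ x = ((‖WithLp.toLp 2 x‖ ^ 2 : ℝ) : 𝕜) := by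
  rw [RCLike.ofReal_pow, ← inner_self_eq_norm_sq_to_K, EuclideanSpace.inner_toLp_toLp,
    dotProduct_comm]

lemma posSemidef_sq_smul_one_sub_conjTranspose_mul_self {B : Matrix n n 𝕜} {ρ : ℝ}
    (hB : ‖toEuclideanCLM (𝕜 := 𝕜) B‖ ≤ ρ) :
    (((ρ ^ 2 : ℝ) : 𝕜) • 1 - Bᴴ * B).PosSemidef := by
  refine .of_dotProduct_mulVec_nonneg ?_ fun x ↦ ?_
  · simp [IsHermitian, conjTranspose_smul]
  have hBx : ‖WithLp.toLp 2 (B *ᵥ x)‖ ≤ ρ * ‖WithLp.toLp 2 x‖ := by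
    simpa using (toEuclideanCLM (𝕜 := 𝕜) B).le_of_opNorm_le hB (WithLp.toLp 2 x)
  have hρ : 0 ≤ ρ := (norm_nonneg _).trans hB
  rw [sub_mulVec, smul_mulVec, one_mulVec, ← mulVec_mulVec, dotProduct_sub, dotProduct_smul,
    dotProduct_mulVec, ← star_mulVec, dotProduct_star_self_eq_norm_toLp_sq,
    dotProduct_star_self_eq_norm_toLp_sq, smul_eq_mul, ← RCLike.ofReal_mul, ← RCLike.ofReal_sub,
    RCLike.ofReal_nonneg, sub_nonneg, ← mul_pow]
  gcongr

lemma posSemidef_fromBlocks_smul_one {B : Matrix n n 𝕜} {ρ : ℝ}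
    (hB : ‖toEuclideanCLM (𝕜 := 𝕜) B‖ ≤ ρ) :
    (fromBlocks ((ρ : 𝕜) • 1) Bᴴ B ((ρ : 𝕜) • 1)).PosSemidef := by
  obtain hρ | hρ := ((norm_nonneg _).trans hB).eq_or_lt
  · have : B = 0 := by simpa [← hρ] using hB
    simpa [← hρ, this] using PosSemidef.zero
  have hρ' : (ρ : 𝕜) ≠ 0 := by exact_mod_cast hρ.ne'
  have hD : ((ρ : 𝕜) • 1 : Matrix n n 𝕜).PosDef := PosDef.one.smul (by exact_mod_cast hρ)
  have := hD.isUnit.invertible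
  have hDinv : ((ρ : 𝕜) • 1 : Matrix n n 𝕜)⁻¹ = (ρ : 𝕜)⁻¹ • 1 :=
    inv_eq_left_inv (by rw [smul_mul_smul_comm, inv_mul_cancel₀ hρ', one_mul, one_smul])
  have hSchur : (ρ : 𝕜) • 1 - Bᴴ * ((ρ : 𝕜)⁻¹ • 1) * Bᴴᴴ =
      ((ρ⁻¹ : ℝ) : 𝕜) • (((ρ ^ 2 : ℝ) : 𝕜) • 1 - Bᴴ * B) := by
    rw [conjTranspose_conjTranspose, Matrix.mul_smul, Matrix.mul_one, Matrix.smul_mul, smul_sub,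
      smul_smul, RCLike.ofReal_inv, RCLike.ofReal_pow, sq, inv_mul_cancel_left₀ hρ']
  nth_rw 2 [← conjTranspose_conjTranspose B]
  rw [PosDef.fromBlocks₂₂ _ _ hD, hDinv, hSchur]
  exact (posSemidef_sq_smul_one_sub_conjTranspose_mul_self hB).smul
    (RCLike.ofReal_nonneg.mpr (inv_nonneg.mpr hρ.le))

lemma posDef_fromBlocks_smul_one_of_norm_le_one {T : Matrix n n 𝕜}
    (hT : ‖toEuclideanCLM (𝕜 := 𝕜) T‖ ≤ 1) {a b : ℝ} (hab : |b| < a) :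
    (fromBlocks ((a : 𝕜) • 1) ((b : 𝕜) • Tᴴ) ((b : 𝕜) • T) ((a : 𝕜) • 1)).PosDef := by
  have hbT : ‖toEuclideanCLM (𝕜 := 𝕜) ((b : 𝕜) • T)‖ ≤ |b| := by
    rw [map_smul, norm_smul, RCLike.norm_ofReal]
    exact mul_le_of_le_one_right (abs_nonneg b) hT
  have hsplit : fromBlocks ((a : 𝕜) • 1) ((b : 𝕜) • Tᴴ) ((b : 𝕜) • T) ((a : 𝕜) • 1) =
      ((a - |b| : ℝ) : 𝕜) • 1 + fromBlocks (((|b| : ℝ) : 𝕜) • 1) ((b : 𝕜) • T)ᴴ ((b : 𝕜) • T)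
        (((|b| : ℝ) : 𝕜) • 1) := by
    rw [← fromBlocks_one, fromBlocks_smul, fromBlocks_add, conjTranspose_smul, RCLike.star_def,
      RCLike.conj_ofReal]
    simp only [← add_smul, ← RCLike.ofReal_add, sub_add_cancel, smul_zero, zero_add]
  rw [hsplit]
  exact (PosDef.one.smul (RCLike.ofReal_pos.mpr (sub_pos.mpr hab))).add_posSemidef
    (posSemidef_fromBlocks_smul_one hbT)

end Matrix

theorem stmt9_general (r : ℕ)
    (Δ : Matrix (Fin r) (Fin r) ℂ) (hΔ : Δ.PosDef)
    (Γ : Matrix (Fin r) (Fin r) ℂ)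
    (hΓ : ‖Matrix.toEuclideanCLM (𝕜 := ℂ) (Δ⁻¹ * Γ * Δ⁻¹)‖ ≤ 1)
    (t : ℂ) (ht : 0 < t.im) :
    Matrix.PosDef (Matrix.fromBlocks
      (((t.im * (1 + ‖t‖ ^ 2) : ℝ) : ℂ) • (Δ ^ 2))
      ((((t ^ 2).im : ℝ) : ℂ) • Γᴴ)
      ((((t ^ 2).im : ℝ) : ℂ) • Γ)
      (((t.im * (1 + ‖t‖ ^ 2) : ℝ) : ℂ) • (Δ ^ 2))) := by
  have hΔu : IsUnit Δ := hΔ.isUnit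
  have hΔdet : IsUnit Δ.det := (isUnit_iff_isUnit_det Δ).mp hΔu
  obtain ⟨T, hT, rfl⟩ : ∃ T : Matrix (Fin r) (Fin r) ℂ,
      ‖toEuclideanCLM (𝕜 := ℂ) T‖ ≤ 1 ∧ Γ = Δ * T * Δ :=
    ⟨_, hΓ, by rw [Matrix.mul_assoc, nonsing_inv_mul_cancel_right _ _ hΔdet,
      mul_nonsing_inv_cancel_left _ _ hΔdet]⟩
  have key := posDef_fromBlocks_smul_one_of_norm_le_one hT
    (Complex.abs_im_sq_lt_im_mul_one_add_norm_sq ht)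
  rw [← IsUnit.posDef_star_left_conjugate_iff (isUnit_fromBlocks_zero₁₂.mpr ⟨hΔu, hΔu⟩),
    star_eq_conjTranspose, conjTranspose_fromBlocks_diagonal_mul_mul] at key
  simpa [hΔ.1.eq, sq, conjTranspose_mul, Matrix.mul_assoc] using key

/-- Let `Δ` be an `r×r` Hermitian positive definite complex matrix, `Γ` an
`r×r` complex matrix with spectral norm `‖Δ⁻¹ Γ Δ⁻¹‖ ≤ 1`, and `t ∈ ℂ` with `Im t > 0`. Then
the Hermitian block matrix
`[[Im(t)(1+|t|²) Δ², Im(t²) Γᴴ], [Im(t²) Γ, Im(t)(1+|t|²) Δ²]]` is positive definite. -/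
theorem stmt9 (r : ℕ) (hr : 1 ≤ r)
    (Δ : Matrix (Fin r) (Fin r) ℂ) (hΔ : Δ.PosDef)
    (Γ : Matrix (Fin r) (Fin r) ℂ)
    (hΓ : ‖Matrix.toEuclideanCLM (𝕜 := ℂ) (Δ⁻¹ * Γ * Δ⁻¹)‖ ≤ 1)
    (t : ℂ) (ht : 0 < t.im) :
    Matrix.PosDef (Matrix.fromBlocks
      (((t.im * (1 + ‖t‖ ^ 2) : ℝ) : ℂ) • (Δ ^ 2))
      ((((t ^ 2).im : ℝ) : ℂ) • Γᴴ)
      ((((t ^ 2).im : ℝ) : ℂ) • Γ)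
      (((t.im * (1 + ‖t‖ ^ 2) : ℝ) : ℂ) • (Δ ^ 2))) :=
  stmt9_general r Δ hΔ Γ hΓ t ht
end

section
/- Let r ≥ 1, let G be an r×r Hermitian negative definite complex matrix, let u, v ∈ ℂ^r be unit vectors, and let χ > 0. Consider the Hermitian 2r×2r block matrix M = [[G, χ·v·uᴴ], [χ·u·vᴴ, G]]. If χ²·(uᴴG⁻¹u)·(vᴴG⁻¹v) ≥ 1, then M has exactly 2r−1 strictly negative eigenvalues (counted with multiplicity); if χ²·(uᴴG⁻¹u)·(vᴴG⁻¹v) < 1, then M has exactly 2r strictly negative eigenvalues. -/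
/-!
Write a vector of `ℂ^(2r)` as `(x₁, x₂)`. The quadratic form of `M` is
`x₁ᴴGx₁ + x₂ᴴGx₂ + 2χ Re(conj(vᴴx₁)(uᴴx₂))`, and Cauchy–Schwarz for the inner product of `-G`
gives `|vᴴx₁|² ≤ (vᴴG⁻¹v)(x₁ᴴGx₁)` and the same for `u, x₂`. Hence when
`χ²(uᴴG⁻¹u)(vᴴG⁻¹v) < 1` the form is negative definite. Otherwise it is still negative definite
on the hyperplane `uᴴx₂ = 0`, but is nonnegative at `(G⁻¹v, -χ(vᴴG⁻¹v) G⁻¹u)`. The number of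
negative eigenvalues of a Hermitian matrix is at least the dimension of any subspace on which its
form is negative definite, and is less than the full dimension as soon as the form is nonnegative
at some nonzero vector.
-/

open Matrix Finset
open scoped ComplexOrder

theorem two_mul_re_star_mul_lt_add {c₁ c₂ : ℂ} {s₁ s₂ p q χ : ℝ} (hs₁ : 0 ≤ s₁) (hs₂ : 0 ≤ s₂)
    (hs : 0 < s₁ + s₂) (hp : 0 ≤ p) (hq : 0 ≤ q) (hc₁ : Complex.normSq c₁ ≤ p * s₁)
    (hc₂ : Complex.normSq c₂ ≤ q * s₂) (h : χ ^ 2 * p * q < 1) :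
    2 * χ * (star c₁ * c₂).re < s₁ + s₂ := by
  set t := 2 * χ * (star c₁ * c₂).re
  have ht : t ^ 2 ≤ χ ^ 2 * p * q * (4 * (s₁ * s₂)) := by
    have : (star c₁ * c₂).re * (star c₁ * c₂).re ≤ (p * s₁) * (q * s₂) := calc
      _ ≤ Complex.normSq (star c₁ * c₂) := Complex.re_sq_le_normSq _
      _ = Complex.normSq c₁ * Complex.normSq c₂ := by simp
      _ ≤ (p * s₁) * (q * s₂) := mul_le_mul hc₁ hc₂ (Complex.normSq_nonneg _) (by positivity)
    nlinarith [sq_nonneg χ]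
  have hk : 0 ≤ χ ^ 2 * p * q := by positivity
  have hamgm : 4 * (s₁ * s₂) ≤ (s₁ + s₂) ^ 2 := by nlinarith [sq_nonneg (s₁ - s₂)]
  -- If `s₁ + s₂ ≤ t`, then `(s₁ + s₂)² ≤ t² ≤ χ²pq · 4s₁s₂ ≤ (s₁ + s₂)²` forces `s₁s₂ = 0`,
  -- hence `t = 0`.
  by_contra! hle
  have hsq : (s₁ + s₂) ^ 2 ≤ t ^ 2 := pow_le_pow_left₀ hs.le hle 2
  have hs₁s₂ : s₁ * s₂ = 0 := by nlinarith [mul_nonneg hs₁ hs₂]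
  nlinarith

namespace Matrix

variable {ι : Type*} [Fintype ι] {A : Matrix ι ι ℂ}

theorem IsHermitian.ofReal_re_star_dotProduct_mulVec (hA : A.IsHermitian) (x : ι → ℂ) :
    ((star x ⬝ᵥ A *ᵥ x).re : ℂ) = star x ⬝ᵥ A *ᵥ x :=
  Complex.ext rfl (by simpa using (hA.im_star_dotProduct_mulVec_self x).symm)

theorem PosDef.re_dotProduct_nonpos_of_neg (hA : (-A).PosDef) (x : ι → ℂ) :
    (star x ⬝ᵥ A *ᵥ x).re ≤ 0 := by
  simpa [neg_mulVec] using hA.posSemidef.re_dotProduct_nonneg x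

theorem PosDef.re_dotProduct_neg_of_neg (hA : (-A).PosDef) {x : ι → ℂ} (hx : x ≠ 0) :
    (star x ⬝ᵥ A *ᵥ x).re < 0 := by
  simpa [neg_mulVec] using hA.re_dotProduct_pos hx

theorem PosDef.re_dotProduct_add_neg_of_neg (hA : (-A).PosDef) {x₁ x₂ : ι → ℂ}
    (hx : Sum.elim x₁ x₂ ≠ 0) : (star x₁ ⬝ᵥ A *ᵥ x₁).re + (star x₂ ⬝ᵥ A *ᵥ x₂).re < 0 := by
  have h₁ := hA.re_dotProduct_nonpos_of_neg x₁
  have h₂ := hA.re_dotProduct_nonpos_of_neg x₂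
  have : x₁ ≠ 0 ∨ x₂ ≠ 0 := by
    contrapose! hx
    rw [hx.1, hx.2, Sum.elim_zero_zero]
  rcases this with h | h
  · linarith [hA.re_dotProduct_neg_of_neg h]
  · linarith [hA.re_dotProduct_neg_of_neg h]

abbrev rankOneCoupling (G : Matrix ι ι ℂ) (u v : ι → ℂ) (χ : ℝ) : Matrix (ι ⊕ ι) (ι ⊕ ι) ℂ :=
  fromBlocks G ((χ : ℂ) • vecMulVec v (star u)) ((χ : ℂ) • vecMulVec u (star v)) G

theorem re_star_dotProduct_rankOneCoupling_mulVec (G : Matrix ι ι ℂ) (u v : ι → ℂ) (χ : ℝ)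
    (x₁ x₂ : ι → ℂ) :
    (star (Sum.elim x₁ x₂) ⬝ᵥ rankOneCoupling G u v χ *ᵥ Sum.elim x₁ x₂).re =
      (star x₁ ⬝ᵥ G *ᵥ x₁).re + (star x₂ ⬝ᵥ G *ᵥ x₂).re +
        2 * χ * (star (star v ⬝ᵥ x₁) * (star u ⬝ᵥ x₂)).re := by
  have h₁ : star x₁ ⬝ᵥ v = star (star v ⬝ᵥ x₁) := by rw [star_dotProduct]
  have h₂ : star x₂ ⬝ᵥ u = star (star u ⬝ᵥ x₂) := by rw [star_dotProduct]
  rw [Function.star_sumElim, fromBlocks_mulVec, sumElim_dotProduct_sumElim, smul_mulVec,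
    smul_mulVec, vecMulVec_mulVec, vecMulVec_mulVec]
  simp only [dotProduct_add, dotProduct_smul, h₁, h₂]
  simp [Complex.mul_re, Complex.mul_im]
  ring

variable [DecidableEq ι]

protected theorem inv_neg {R : Type*} [CommRing R] (B : Matrix ι ι R) : (-B)⁻¹ = -B⁻¹ := by
  by_cases h : IsUnit B.det
  · exact inv_eq_left_inv (by rw [neg_mul_neg, nonsing_inv_mul _ h])
  · have h' : ¬IsUnit (-B).det := by
      rw [det_neg, IsUnit.mul_iff]
      exact fun h' ↦ h h'.2
    rw [nonsing_inv_apply_not_isUnit _ h, nonsing_inv_apply_not_isUnit _ h', neg_zero]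

theorem IsHermitian.star_inv_mulVec_dotProduct_mulVec_inv_mulVec (hA : A.IsHermitian)
    (hdet : IsUnit A.det) (w : ι → ℂ) :
    star (A⁻¹ *ᵥ w) ⬝ᵥ A *ᵥ (A⁻¹ *ᵥ w) = star w ⬝ᵥ A⁻¹ *ᵥ w := by
  rw [mulVec_mulVec, mul_nonsing_inv _ hdet, one_mulVec, star_mulVec, hA.inv.eq,
    dotProduct_mulVec]

theorem PosDef.normSq_dotProduct_le {H : Matrix ι ι ℂ} (hH : H.PosDef) (w x : ι → ℂ) :
    Complex.normSq (star w ⬝ᵥ x) ≤ (star w ⬝ᵥ H⁻¹ *ᵥ w).re * (star x ⬝ᵥ H *ᵥ x).re := by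
  let _ := H.toSeminormedAddCommGroup hH.posSemidef
  let _ := H.toInnerProductSpace hH.posSemidef
  set g := H⁻¹ *ᵥ w
  have hHg : H *ᵥ g = w := by
    rw [mulVec_mulVec, mul_nonsing_inv _ ((isUnit_iff_isUnit_det H).mp hH.isUnit), one_mulVec]
  have hgH : star g ᵥ* H = star w := by
    rw [← hH.isHermitian.eq, ← star_mulVec, hHg]
  have hgg : star g ⬝ᵥ w = star w ⬝ᵥ H⁻¹ *ᵥ w := by
    rw [star_mulVec, hH.inv.isHermitian.eq, dotProduct_mulVec]
  have key := inner_mul_inner_self_le (𝕜 := ℂ) x g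
  rw [← inner_conj_symm x g, RCLike.norm_conj] at key
  -- `Matrix.toInnerProductSpace` has `⟪x, y⟫ = (H *ᵥ y) ⬝ᵥ star x`.
  change ‖(H *ᵥ x) ⬝ᵥ star g‖ * ‖(H *ᵥ x) ⬝ᵥ star g‖ ≤
    ((H *ᵥ x) ⬝ᵥ star x).re * ((H *ᵥ g) ⬝ᵥ star g).re at key
  rw [dotProduct_comm (H *ᵥ x), dotProduct_mulVec, hgH, dotProduct_comm (H *ᵥ x), hHg,
    dotProduct_comm w, hgg] at key
  rw [Complex.normSq_eq_norm_sq, sq]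
  exact key.trans_eq (mul_comm _ _)

theorem IsHermitian.re_star_dotProduct_mulVec_eq_sum (hA : A.IsHermitian) (x : ι → ℂ) :
    (star x ⬝ᵥ A *ᵥ x).re = ∑ i, hA.eigenvalues i *
      ‖(star (hA.eigenvectorUnitary : Matrix ι ι ℂ) *ᵥ x) i‖ ^ 2 := by
  set U : Matrix ι ι ℂ := (hA.eigenvectorUnitary : Matrix ι ι ℂ)
  have hxU : star x ᵥ* U = star (star U *ᵥ x) := by
    rw [star_mulVec, star_eq_conjTranspose, conjTranspose_conjTranspose]
  conv_lhs => rw [hA.spectral_theorem, Unitary.conjStarAlgAut_apply, ← mulVec_mulVec,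
    ← mulVec_mulVec, dotProduct_mulVec, hxU]
  simp only [dotProduct, mulVec_diagonal, Function.comp_apply, Pi.star_apply, Complex.re_sum]
  refine Finset.sum_congr rfl fun i _ => ?_
  rw [RCLike.star_def, mul_left_comm, Complex.conj_mul', ← Complex.ofReal_pow]
  exact Complex.re_ofReal_mul _ _

theorem IsHermitian.finrank_le_card_eigenvalues_neg (hA : A.IsHermitian)
    {W : Submodule ℂ (ι → ℂ)} (hW : ∀ x ∈ W, x ≠ 0 → (star x ⬝ᵥ A *ᵥ x).re < 0) :
    Module.finrank ℂ W ≤ #{i | hA.eigenvalues i < 0} := by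
  set S : Finset ι := {i | hA.eigenvalues i < 0}
  let f : W →ₗ[ℂ] (S → ℂ) := (LinearMap.pi fun i : S ↦ LinearMap.proj (i : ι)) ∘ₗ
    (star (hA.eigenvectorUnitary : Matrix ι ι ℂ)).mulVecLin ∘ₗ W.subtype
  -- If the eigen-coordinates of `x ∈ W` along negative eigenvalues vanish, the form is `≥ 0`.
  have hf : Function.Injective f := by
    refine (injective_iff_map_eq_zero f).mpr fun x hx ↦ ?_
    by_contra hx0
    have hneg := hW x x.2 (by simpa using hx0)
    rw [hA.re_star_dotProduct_mulVec_eq_sum] at hneg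
    refine hneg.not_ge (Finset.sum_nonneg fun i _ ↦ ?_)
    by_cases hi : hA.eigenvalues i < 0
    · have : (star (hA.eigenvectorUnitary : Matrix ι ι ℂ) *ᵥ x) i = 0 :=
        congrFun hx ⟨i, by simpa [S] using hi⟩
      simp [this]
    · exact mul_nonneg (not_lt.mp hi) (sq_nonneg _)
  simpa using LinearMap.finrank_le_finrank_of_injective hf

theorem IsHermitian.card_eigenvalues_neg_lt (hA : A.IsHermitian) {x : ι → ℂ} (hx : x ≠ 0)
    (h : 0 ≤ (star x ⬝ᵥ A *ᵥ x).re) : #{i | hA.eigenvalues i < 0} < Fintype.card ι := by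
  set U : Matrix ι ι ℂ := (hA.eigenvectorUnitary : Matrix ι ι ℂ)
  by_contra! hle
  have hall : ∀ i, hA.eigenvalues i < 0 := by
    simpa [Finset.filter_eq_self] using Finset.eq_univ_of_card _ (le_antisymm (card_le_univ _) hle)
  have hUx : star U *ᵥ x ≠ 0 := fun h0 ↦ hx <| by
    rw [← one_mulVec x, ← (Unitary.mem_iff.mp hA.eigenvectorUnitary.2).2, ← mulVec_mulVec, h0,
      mulVec_zero]
  obtain ⟨j, hj⟩ := Function.ne_iff.mp hUx
  rw [hA.re_star_dotProduct_mulVec_eq_sum] at h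
  refine h.not_gt ?_
  simpa using Finset.sum_lt_sum (g := 0)
    (fun i _ ↦ mul_nonpos_of_nonpos_of_nonneg (hall i).le (sq_nonneg _))
    ⟨j, Finset.mem_univ j, mul_neg_of_neg_of_pos (hall j) (by positivity)⟩

variable {G : Matrix ι ι ℂ} {u v : ι → ℂ} {χ : ℝ}

theorem exists_hyperplane_negDef_rankOneCoupling (hG : (-G).PosDef) (hu : u ≠ 0) :
    ∃ W : Submodule ℂ (ι ⊕ ι → ℂ), Module.finrank ℂ W + 1 = 2 * Fintype.card ι ∧
      ∀ x ∈ W, x ≠ 0 → (star x ⬝ᵥ rankOneCoupling G u v χ *ᵥ x).re < 0 := by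
  set f := dotProductEquiv ℂ (ι ⊕ ι) (Sum.elim 0 (star u))
  have hf : f ≠ 0 := (LinearEquiv.map_ne_zero_iff _).mpr fun h ↦
    hu (star_eq_zero.mp (by simpa using congrArg (· ∘ Sum.inr) h))
  refine ⟨LinearMap.ker f, ?_, fun x hx hx0 ↦ ?_⟩
  · rw [Module.Dual.finrank_ker_add_one_of_ne_zero hf, Module.finrank_fintype_fun_eq_card,
      Fintype.card_sum, two_mul]
  obtain ⟨x₁, x₂, rfl⟩ : ∃ x₁ x₂, x = Sum.elim x₁ x₂ := ⟨_, _, (Sum.elim_comp_inl_inr x).symm⟩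
  have hc : star u ⬝ᵥ x₂ = 0 := by simpa [f, sumElim_dotProduct_sumElim] using hx
  rw [re_star_dotProduct_rankOneCoupling_mulVec, hc, mul_zero, Complex.zero_re, mul_zero, add_zero]
  exact hG.re_dotProduct_add_neg_of_neg hx0

theorem negDef_rankOneCoupling_of_lt_one (hG : (-G).PosDef)
    (h : χ ^ 2 * (star u ⬝ᵥ G⁻¹ *ᵥ u).re * (star v ⬝ᵥ G⁻¹ *ᵥ v).re < 1) {x : ι ⊕ ι → ℂ}
    (hx : x ≠ 0) : (star x ⬝ᵥ rankOneCoupling G u v χ *ᵥ x).re < 0 := by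
  obtain ⟨x₁, x₂, rfl⟩ : ∃ x₁ x₂, x = Sum.elim x₁ x₂ := ⟨_, _, (Sum.elim_comp_inl_inr x).symm⟩
  have hGinv : (-G⁻¹).PosDef := Matrix.inv_neg G ▸ hG.inv
  have hcs (w y : ι → ℂ) : Complex.normSq (star w ⬝ᵥ y) ≤
      -(star w ⬝ᵥ G⁻¹ *ᵥ w).re * -(star y ⬝ᵥ G *ᵥ y).re := by
    simpa [Matrix.inv_neg, neg_mulVec] using hG.normSq_dotProduct_le w y
  have key := two_mul_re_star_mul_lt_add (χ := χ)
    (neg_nonneg.mpr (hG.re_dotProduct_nonpos_of_neg x₁))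
    (neg_nonneg.mpr (hG.re_dotProduct_nonpos_of_neg x₂))
    (by linarith [hG.re_dotProduct_add_neg_of_neg hx])
    (neg_nonneg.mpr (hGinv.re_dotProduct_nonpos_of_neg v))
    (neg_nonneg.mpr (hGinv.re_dotProduct_nonpos_of_neg u)) (hcs v x₁) (hcs u x₂)
    (by linarith)
  rw [re_star_dotProduct_rankOneCoupling_mulVec]
  linarith

theorem exists_ne_zero_re_rankOneCoupling_nonneg_of_one_le (hG : (-G).PosDef)
    (h : 1 ≤ χ ^ 2 * (star u ⬝ᵥ G⁻¹ *ᵥ u).re * (star v ⬝ᵥ G⁻¹ *ᵥ v).re) :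
    ∃ x ≠ 0, 0 ≤ (star x ⬝ᵥ rankOneCoupling G u v χ *ᵥ x).re := by
  set a := (star u ⬝ᵥ G⁻¹ *ᵥ u).re
  set b := (star v ⬝ᵥ G⁻¹ *ᵥ v).re
  have hGh : G.IsHermitian := by simpa using hG.isHermitian.neg
  have hdet : IsUnit G.det := (isUnit_iff_isUnit_det G).mp (by simpa using hG.isUnit.neg)
  have hGinv : (-G⁻¹).PosDef := Matrix.inv_neg G ▸ hG.inv
  have ha : ((a : ℝ) : ℂ) = star u ⬝ᵥ G⁻¹ *ᵥ u := hGh.inv.ofReal_re_star_dotProduct_mulVec u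
  have hb : ((b : ℝ) : ℂ) = star v ⬝ᵥ G⁻¹ *ᵥ v := hGh.inv.ofReal_re_star_dotProduct_mulVec v
  have hb0 : b ≠ 0 := by
    rintro hb0
    rw [hb0, mul_zero] at h
    linarith
  have hbneg : b ≤ 0 := hGinv.re_dotProduct_nonpos_of_neg v
  -- `k` minimises the form along `(G⁻¹v, k • G⁻¹u)`, where it equals `b + k²a + 2χkab`.
  set k : ℂ := ((-(χ * b) : ℝ) : ℂ)
  refine ⟨Sum.elim (G⁻¹ *ᵥ v) (k • G⁻¹ *ᵥ u), fun h0 ↦ hb0 ?_, ?_⟩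
  · have := congrArg (fun x ↦ star v ⬝ᵥ x ∘ Sum.inl) h0
    simp only [Sum.elim_comp_inl, Pi.zero_comp, dotProduct_zero] at this
    rw [← hb] at this
    exact_mod_cast this
  · rw [re_star_dotProduct_rankOneCoupling_mulVec, star_smul, mulVec_smul, smul_dotProduct,
      dotProduct_smul, dotProduct_smul, hGh.star_inv_mulVec_dotProduct_mulVec_inv_mulVec hdet,
      hGh.star_inv_mulVec_dotProduct_mulVec_inv_mulVec hdet, ← ha, ← hb]
    simp only [k, RCLike.star_def, Complex.conj_ofReal, smul_eq_mul]
    norm_cast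
    nlinarith

end Matrix

theorem stmt10_general (r : ℕ)
    (G : Matrix (Fin r) (Fin r) ℂ) (hG : (-G).PosDef)
    (u v : Fin r → ℂ)
    (χ : ℝ)
    (M : Matrix (Fin r ⊕ Fin r) (Fin r ⊕ Fin r) ℂ)
    (hMdef : M = Matrix.fromBlocks G ((χ : ℂ) • Matrix.vecMulVec v (star u))
      ((χ : ℂ) • Matrix.vecMulVec u (star v)) G)
    (hM : M.IsHermitian) :
    ((1 : ℝ) ≤ ((χ : ℂ) ^ 2 * dotProduct (star u) (G⁻¹.mulVec u) *
          dotProduct (star v) (G⁻¹.mulVec v)).re →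
      (Finset.univ.filter fun i => hM.eigenvalues i < 0).card = 2 * r - 1) ∧
    (((χ : ℂ) ^ 2 * dotProduct (star u) (G⁻¹.mulVec u) *
          dotProduct (star v) (G⁻¹.mulVec v)).re < 1 →
      (Finset.univ.filter fun i => hM.eigenvalues i < 0).card = 2 * r) := by
  subst hMdef
  have hGinv : G⁻¹.IsHermitian := (by simpa using hG.isHermitian.neg : G.IsHermitian).inv
  rw [← hGinv.ofReal_re_star_dotProduct_mulVec u, ← hGinv.ofReal_re_star_dotProduct_mulVec v]
  norm_cast
  refine ⟨fun h ↦ ?_, fun h ↦ ?_⟩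
  · have hu : u ≠ 0 := by
      rintro rfl
      norm_num at h
    obtain ⟨W, hWrank, hW⟩ := exists_hyperplane_negDef_rankOneCoupling (v := v) (χ := χ) hG hu
    obtain ⟨x, hx, hx0⟩ := exists_ne_zero_re_rankOneCoupling_nonneg_of_one_le hG h
    have hlow := hM.finrank_le_card_eigenvalues_neg hW
    have hupp := hM.card_eigenvalues_neg_lt hx hx0
    simp only [Fintype.card_fin, Fintype.card_sum] at hWrank hupp
    omega
  · have hlow := hM.finrank_le_card_eigenvalues_neg (W := ⊤) fun x _ ↦
      negDef_rankOneCoupling_of_lt_one hG h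
    rw [finrank_top, Module.finrank_fintype_fun_eq_card, Fintype.card_sum, Fintype.card_fin]
      at hlow
    have hupp := (Finset.univ.filter fun i ↦ hM.eigenvalues i < 0).card_le_univ
    rw [Fintype.card_sum, Fintype.card_fin] at hupp
    omega

/-- Let `G` be an `r×r` Hermitian negative definite complex matrix, `u, v`
unit vectors in `ℂ^r`, `χ > 0`, and `M = [[G, χ·v·uᴴ], [χ·u·vᴴ, G]]`. If
`χ²·(uᴴG⁻¹u)·(vᴴG⁻¹v) ≥ 1` then `M` has exactly `2r−1` strictly negative eigenvalues (with
multiplicity); if `χ²·(uᴴG⁻¹u)·(vᴴG⁻¹v) < 1` then `M` has exactly `2r` strictly negative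
eigenvalues. (The quantities `uᴴG⁻¹u`, `vᴴG⁻¹v` are real since `G` is Hermitian, so the
comparison is stated on the real part.) -/
theorem stmt10 (r : ℕ) (hr : 1 ≤ r)
    (G : Matrix (Fin r) (Fin r) ℂ) (hG : (-G).PosDef)
    (u v : Fin r → ℂ)
    (hu : dotProduct (star u) u = 1) (hv : dotProduct (star v) v = 1)
    (χ : ℝ) (hχ : 0 < χ)
    (M : Matrix (Fin r ⊕ Fin r) (Fin r ⊕ Fin r) ℂ)
    (hMdef : M = Matrix.fromBlocks G ((χ : ℂ) • Matrix.vecMulVec v (star u))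
      ((χ : ℂ) • Matrix.vecMulVec u (star v)) G)
    (hM : M.IsHermitian) :
    ((1 : ℝ) ≤ ((χ : ℂ) ^ 2 * dotProduct (star u) (G⁻¹.mulVec u) *
          dotProduct (star v) (G⁻¹.mulVec v)).re →
      (Finset.univ.filter fun i => hM.eigenvalues i < 0).card = 2 * r - 1) ∧
    (((χ : ℂ) ^ 2 * dotProduct (star u) (G⁻¹.mulVec u) *
          dotProduct (star v) (G⁻¹.mulVec v)).re < 1 →
      (Finset.univ.filter fun i => hM.eigenvalues i < 0).card = 2 * r) :=
  stmt10_general r G hG u v χ M hMdef hM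
end

section
/- Let N ≥ 1, let P and Q be N×N complex matrices satisfying P = Pᴴ, P² = P, Q = Qᴴ and Q² = Q, and let w ∈ ℂ with w ∉ [0, ∞). Then P·Q − wI and P·Q·P − wI are both invertible, (P·Q − wI)⁻¹·P = (P·Q·P − wI)⁻¹·P, and the spectral norm of (P·Q − wI)⁻¹·P is at most 1/dist(w, [0,∞)), where dist(w,[0,∞)) is the distance from w to the nonnegative real axis. -/
/-!
`P Q P = (Q P)ᴴ (Q P)` is positive semidefinite, so its spectrum lies in `[0, ∞)`; by the
continuous functional calculus the normal element `P Q P - w` is invertible with inverse of norm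
at most `1 / dist(w, [0, ∞))`. The nonzero spectra of `(P Q) P` and `P (P Q) = P Q` agree, so
`P Q - w` is invertible too, and `(P Q - w) P = (P Q P - w) P = P (P Q P - w)` shows that the two
inverses agree after multiplication by `P`. Finally `‖P‖ ≤ 1`. The matrix statement is
transported from the C⋆-algebra of operators on `EuclideanSpace ℂ (Fin N)`.
-/

open Matrix Metric
open scoped ComplexOrder Ring

theorem map_ringInverse {M N F : Type*} [MonoidWithZero M] [MonoidWithZero N] [EquivLike F M N]
    [MulEquivClass F M N] (e : F) (x : M) : e x⁻¹ʳ = (e x)⁻¹ʳ := by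
  by_cases hx : IsUnit x
  · rw [← mul_one (e x)⁻¹ʳ, ← map_one e, ← Ring.mul_inverse_cancel x hx, map_mul,
      Ring.inverse_mul_cancel_left _ _ (hx.map e)]
  · rw [Ring.inverse_non_unit x hx, Ring.inverse_non_unit _ (by rwa [isUnit_map_iff]), map_zero]

section Algebra

variable {𝕜 A : Type*}

theorem spectrum.notMem_iff_isUnit_sub_algebraMap [CommRing 𝕜] [Ring A] [Algebra 𝕜 A] {r : 𝕜}
    {a : A} : r ∉ spectrum 𝕜 a ↔ IsUnit (a - algebraMap 𝕜 A r) := by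
  rw [spectrum.notMem_iff, ← IsUnit.neg_iff, neg_sub]

variable [Field 𝕜] [Ring A] [Algebra 𝕜 A] {p : A}

theorem IsIdempotentElem.spectrum_mul_mul_self_diff_zero (hp : IsIdempotentElem p) (q : A) :
    spectrum 𝕜 (p * q * p) \ {0} = spectrum 𝕜 (p * q) \ {0} := by
  rw [spectrum.nonzero_mul_comm, ← mul_assoc, hp.eq]

theorem IsIdempotentElem.isUnit_mul_sub_algebraMap (hp : IsIdempotentElem p) (q : A) {w : 𝕜}
    (hw : w ≠ 0) (hb : IsUnit (p * q * p - algebraMap 𝕜 A w)) :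
    IsUnit (p * q - algebraMap 𝕜 A w) := by
  rw [← spectrum.notMem_iff_isUnit_sub_algebraMap] at hb ⊢
  intro hw'
  have hw'' : w ∈ spectrum 𝕜 (p * q * p) \ {0} :=
    hp.spectrum_mul_mul_self_diff_zero (𝕜 := 𝕜) q ▸ ⟨hw', hw⟩
  exact hb hw''.1

theorem IsIdempotentElem.inverse_mul_sub_algebraMap_mul (hp : IsIdempotentElem p) (q : A) (w : 𝕜)
    (ha : IsUnit (p * q - algebraMap 𝕜 A w)) (hb : IsUnit (p * q * p - algebraMap 𝕜 A w)) :
    (p * q - algebraMap 𝕜 A w)⁻¹ʳ * p = (p * q * p - algebraMap 𝕜 A w)⁻¹ʳ * p := by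
  obtain ⟨b, hb⟩ := hb
  have hpb : Commute p b := by
    rw [hb, Commute, SemiconjBy, mul_sub, sub_mul, ← mul_assoc, ← mul_assoc, hp.eq,
      mul_assoc _ p p, hp.eq, Algebra.commutes]
  have hab : (p * q - algebraMap 𝕜 A w) * p = b * p := by
    rw [hb, sub_mul, sub_mul, mul_assoc _ p p, hp.eq]
  rw [← hb, Ring.inverse_unit, Ring.inverse_mul_eq_iff_eq_mul _ _ _ ha, ← hpb.units_inv_right.eq,
    ← mul_assoc, hab, ← hpb.eq, mul_assoc, Units.mul_inv, mul_one]

end Algebra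

theorem spectrum_subset_image_ofReal_Ici_of_nonneg {A : Type*} [Ring A] [PartialOrder A]
    [Algebra ℂ A] [NonnegSpectrumClass ℂ A] {a : A} (ha : 0 ≤ a) :
    spectrum ℂ a ⊆ Complex.ofReal '' Set.Ici 0 := fun z hz ↦ by
  have hz0 : 0 ≤ z := spectrum_nonneg_of_nonneg ha hz
  exact ⟨z.re, (Complex.nonneg_iff.1 hz0).1, (Complex.eq_re_of_ofReal_le (r := 0) (by simpa)).symm⟩

section CStarAlgebra

variable {A : Type*} [CStarAlgebra A]

theorem IsStarNormal.norm_inverse_sub_algebraMap_le {a : A} [IsStarNormal a] {s : Set ℂ}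
    (hs : spectrum ℂ a ⊆ s) {w : ℂ} (hw : 0 < infDist w s) :
    ‖(a - algebraMap ℂ A w)⁻¹ʳ‖ ≤ (infDist w s)⁻¹ := by
  have hdist {x : ℂ} (hx : x ∈ spectrum ℂ a) : infDist w s ≤ ‖x - w‖ := by
    rw [← dist_eq_norm']; exact infDist_le_dist_of_mem (hs hx)
  have hne : ∀ x ∈ spectrum ℂ a, x - w ≠ 0 := fun x hx h ↦ by
    have := hdist hx; rw [h, norm_zero] at this; linarith
  have hcfc : cfc (fun x ↦ x - w) a = a - algebraMap ℂ A w := by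
    rw [cfc_sub .., cfc_id' .., cfc_const ..]
  rw [← hcfc, ← cfc_inv _ _ hne]
  refine norm_cfc_le (by positivity) fun x hx ↦ ?_
  rw [norm_inv]
  exact inv_anti₀ hw (hdist hx)

end CStarAlgebra

section StarProjection

variable {A : Type*} [CStarAlgebra A] [PartialOrder A] [StarOrderedRing A] {p q : A}

theorem IsStarProjection.isUnit_mul_mul_sub_algebraMap (hp : IsStarProjection p)
    (hq : IsStarProjection q) {w : ℂ} (hw : w ∉ Complex.ofReal '' Set.Ici 0) :
    IsUnit (p * q * p - algebraMap ℂ A w) :=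
  spectrum.notMem_iff_isUnit_sub_algebraMap.1 fun h ↦
    hw <| spectrum_subset_image_ofReal_Ici_of_nonneg (hp.isSelfAdjoint.conjugate_nonneg hq.nonneg) h

theorem IsStarProjection.norm_inverse_mul_mul_sub_algebraMap_mul_le (hp : IsStarProjection p)
    (hq : IsStarProjection q) {w : ℂ} (hw : 0 < infDist w (Complex.ofReal '' Set.Ici 0)) :
    ‖(p * q * p - algebraMap ℂ A w)⁻¹ʳ * p‖ ≤ (infDist w (Complex.ofReal '' Set.Ici 0))⁻¹ := by
  have hpos : 0 ≤ p * q * p := hp.isSelfAdjoint.conjugate_nonneg hq.nonneg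
  have := (IsSelfAdjoint.of_nonneg hpos).isStarNormal
  calc ‖(p * q * p - algebraMap ℂ A w)⁻¹ʳ * p‖
      ≤ ‖(p * q * p - algebraMap ℂ A w)⁻¹ʳ‖ * ‖p‖ := norm_mul_le _ _
    _ ≤ (infDist w (Complex.ofReal '' Set.Ici 0))⁻¹ * 1 :=
      mul_le_mul (IsStarNormal.norm_inverse_sub_algebraMap_le
        (spectrum_subset_image_ofReal_Ici_of_nonneg hpos) hw) hp.norm_le (norm_nonneg _)
        (by positivity)
    _ = (infDist w (Complex.ofReal '' Set.Ici 0))⁻¹ := mul_one _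

end StarProjection

theorem stmt13_general (N : ℕ) (P Q : Matrix (Fin N) (Fin N) ℂ)
    (hP : Pᴴ = P) (hP2 : P * P = P) (hQ : Qᴴ = Q) (hQ2 : Q * Q = Q)
    (w : ℂ) (hw : ∀ x : ℝ, 0 ≤ x → (x : ℂ) ≠ w) :
    IsUnit (P * Q - w • (1 : Matrix (Fin N) (Fin N) ℂ)) ∧
    IsUnit (P * Q * P - w • (1 : Matrix (Fin N) (Fin N) ℂ)) ∧
    (P * Q - w • 1)⁻¹ * P = (P * Q * P - w • 1)⁻¹ * P ∧
    ‖Matrix.toEuclideanCLM (𝕜 := ℂ) ((P * Q - w • 1)⁻¹ * P)‖ ≤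
      1 / Metric.infDist w (Complex.ofReal '' Set.Ici (0 : ℝ)) := by
  have hwS : w ∉ Complex.ofReal '' Set.Ici 0 := by
    rintro ⟨x, hx, rfl⟩
    exact hw x hx rfl
  have hd : 0 < infDist w (Complex.ofReal '' Set.Ici 0) :=
    (Complex.isometry_ofReal.isClosedEmbedding.isClosedMap _ isClosed_Ici).notMem_iff_infDist_pos
      ⟨0, 0, Set.self_mem_Ici, Complex.ofReal_zero⟩ |>.1 hwS
  let f := toEuclideanCLM (𝕜 := ℂ) (n := Fin N)
  have hf (X : Matrix (Fin N) (Fin N) ℂ) : f (X - w • 1) = f X - algebraMap ℂ _ w := by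
    rw [map_sub, map_smul, map_one, Algebra.algebraMap_eq_smul_one]
  have hf_inv (X : Matrix (Fin N) (Fin N) ℂ) : f X⁻¹ = (f X)⁻¹ʳ := by
    rw [nonsing_inv_eq_ringInverse, map_ringInverse]
  have hp : IsStarProjection (f P) := IsStarProjection.map ⟨hP2, hP⟩ f
  have hq : IsStarProjection (f Q) := IsStarProjection.map ⟨hQ2, hQ⟩ f
  have hB : IsUnit (f P * f Q * f P - algebraMap ℂ _ w) :=
    hp.isUnit_mul_mul_sub_algebraMap hq hwS
  have hA : IsUnit (f P * f Q - algebraMap ℂ _ w) :=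
    hp.isIdempotentElem.isUnit_mul_sub_algebraMap _
      (fun h ↦ hwS ⟨0, Set.self_mem_Ici, h ▸ Complex.ofReal_zero⟩) hB
  have hAB := hp.isIdempotentElem.inverse_mul_sub_algebraMap_mul _ w hA hB
  refine ⟨?_, ?_, EquivLike.injective f ?_, ?_⟩
  · rw [← isUnit_map_iff f, hf, map_mul]
    exact hA
  · rw [← isUnit_map_iff f, hf, map_mul, map_mul]
    exact hB
  · simpa only [map_mul, hf_inv, hf] using hAB
  · rw [map_mul, hf_inv, hf, map_mul, hAB, one_div]
    exact hp.norm_inverse_mul_mul_sub_algebraMap_mul_le hq hd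

/-- Let `P, Q` be `N×N` orthogonal projection matrices and `w ∈ ℂ` with
`w ∉ [0, ∞)`. Then `P·Q − w·1` and `P·Q·P − w·1` are invertible,
`(P·Q − w·1)⁻¹·P = (P·Q·P − w·1)⁻¹·P`, and the spectral norm of `(P·Q − w·1)⁻¹·P` is at most
`1 / dist(w, [0, ∞))`. -/
theorem stmt13 (N : ℕ) (hN : 1 ≤ N) (P Q : Matrix (Fin N) (Fin N) ℂ)
    (hP : Pᴴ = P) (hP2 : P * P = P) (hQ : Qᴴ = Q) (hQ2 : Q * Q = Q)
    (w : ℂ) (hw : ∀ x : ℝ, 0 ≤ x → (x : ℂ) ≠ w) :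
    IsUnit (P * Q - w • (1 : Matrix (Fin N) (Fin N) ℂ)) ∧
    IsUnit (P * Q * P - w • (1 : Matrix (Fin N) (Fin N) ℂ)) ∧
    (P * Q - w • 1)⁻¹ * P = (P * Q * P - w • 1)⁻¹ * P ∧
    ‖Matrix.toEuclideanCLM (𝕜 := ℂ) ((P * Q - w • 1)⁻¹ * P)‖ ≤
      1 / Metric.infDist w (Complex.ofReal '' Set.Ici (0 : ℝ)) :=
  stmt13_general N P Q hP hP2 hQ hQ2 w hw
end

section
/- For every real number c with 0 < c < 1, one has ∫₀^{4c(1−c)} √(λ·(4c(1−c) − λ)) / (2π·λ·(1 − λ)) dλ = min(c, 1−c). -/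
/-!
With `s = √(1 - a)`, the function
`(arcsin (2λ/a - 1) - s · arcsin (((2 - a)λ - a) / (a(1 - λ)))) / (2π)`
is a primitive of `√(λ(a - λ)) / (2πλ(1 - λ))` on `(0, a)` for `0 < a ≤ 1`; both arcsines run
from `-π/2` to `π/2`, so the integral over `[0, a]` is `(1 - s) / 2`. For `a = 4c(1 - c)` one has
`s = |1 - 2c|` and `(1 - |1 - 2c|) / 2 = min c (1 - c)`.
-/

open Real Set MeasureTheory intervalIntegral

lemma hasDerivAt_arcsin_two_mul_div_sub_one {a x : ℝ} (hx0 : 0 < x) (hxa : x < a) :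
    HasDerivAt (fun l => arcsin (2 * l / a - 1)) (√(x * (a - x)))⁻¹ x := by
  have ha : 0 < a := hx0.trans hxa
  have hlin : HasDerivAt (fun l : ℝ => 2 * l / a - 1) (2 / a) x := by
    simpa using (((hasDerivAt_id x).const_mul 2).div_const a).sub_const 1
  have hsqrt : √(1 - (2 * x / a - 1) ^ 2) = 2 * √(x * (a - x)) / a := by
    rw [show 1 - (2 * x / a - 1) ^ 2 = (2 / a) ^ 2 * (x * (a - x)) by field_simp; ring,
      sqrt_mul (by positivity), sqrt_sq (by positivity)]
    ring
  have hne : √(x * (a - x)) ≠ 0 := (sqrt_pos.2 (by nlinarith)).ne'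
  refine ((hasDerivAt_arcsin ?_ ?_).comp x hlin).congr_deriv ?_
  · rw [Ne, sub_eq_iff_eq_add, div_eq_iff ha.ne']; intro h; linarith
  · rw [Ne, sub_eq_iff_eq_add, div_eq_iff ha.ne']; intro h; linarith
  · rw [hsqrt]; field_simp

lemma hasDerivAt_sqrt_one_sub_mul_arcsin {a x : ℝ} (hx0 : 0 < x) (hxa : x < a) (ha1 : a ≤ 1) :
    HasDerivAt (fun l => √(1 - a) * arcsin (((2 - a) * l - a) / (a * (1 - l))))
      ((1 - a) / ((1 - x) * √(x * (a - x)))) x := by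
  rcases ha1.eq_or_lt with rfl | ha1
  · simpa using hasDerivAt_const x (0 : ℝ)
  have ha : 0 < a := hx0.trans hxa
  have hx1 : 1 - x ≠ 0 := by linarith
  have hden : 0 < a * (1 - x) := by nlinarith
  have hmob : HasDerivAt (fun l : ℝ => ((2 - a) * l - a) / (a * (1 - l)))
      (2 * (1 - a) / (a * (1 - x) ^ 2)) x := by
    have hnum : HasDerivAt (fun l : ℝ => (2 - a) * l - a) (2 - a) x := by
      simpa using ((hasDerivAt_id x).const_mul (2 - a)).sub_const a
    have hdenom : HasDerivAt (fun l : ℝ => a * (1 - l)) (-a) x := by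
      simpa using ((hasDerivAt_id x).const_sub 1).const_mul a
    refine (hnum.div hdenom hden.ne').congr_deriv ?_
    field_simp
    ring
  have hsqrt : √(1 - (((2 - a) * x - a) / (a * (1 - x))) ^ 2)
      = 2 * √(1 - a) * √(x * (a - x)) / (a * (1 - x)) := by
    rw [show 1 - (((2 - a) * x - a) / (a * (1 - x))) ^ 2
        = (2 / (a * (1 - x))) ^ 2 * ((1 - a) * (x * (a - x))) by field_simp; ring,
      sqrt_mul (by positivity), sqrt_sq (by positivity), sqrt_mul (by linarith)]
    ring
  have hs : √(1 - a) ≠ 0 := (sqrt_pos.2 (by linarith)).ne'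
  have ht : √(x * (a - x)) ≠ 0 := (sqrt_pos.2 (by nlinarith)).ne'
  refine (((hasDerivAt_arcsin ?_ ?_).comp x hmob).const_mul _).congr_deriv ?_
  · rw [Ne, div_eq_iff hden.ne']; intro h; nlinarith
  · rw [Ne, div_eq_iff hden.ne']; intro h; nlinarith
  · rw [hsqrt, ← sq_sqrt (show 0 ≤ 1 - a by linarith)]
    field_simp

-- For `a = 1` the second arcsine is `arcsin (-1)` on `[0, 1)` and hits `0 / 0` at `1`; the factor
-- `√(1 - a) = 0` removes it.
noncomputable def projProductPrimitive (a l : ℝ) : ℝ :=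
  (arcsin (2 * l / a - 1) - √(1 - a) * arcsin (((2 - a) * l - a) / (a * (1 - l)))) / (2 * π)

lemma hasDerivAt_projProductPrimitive {a x : ℝ} (hx0 : 0 < x) (hxa : x < a) (ha1 : a ≤ 1) :
    HasDerivAt (projProductPrimitive a) (√(x * (a - x)) / (2 * π * x * (1 - x))) x := by
  have hx1 : 1 - x ≠ 0 := by linarith
  have ht : √(x * (a - x)) ≠ 0 := (sqrt_pos.2 (by nlinarith)).ne'
  refine (((hasDerivAt_arcsin_two_mul_div_sub_one hx0 hxa).sub
    (hasDerivAt_sqrt_one_sub_mul_arcsin hx0 hxa ha1)).div_const (2 * π)).congr_deriv ?_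
  have hsq : √(x * (a - x)) ^ 2 = x * (a - x) := sq_sqrt (by nlinarith)
  field_simp
  linear_combination -hsq

lemma continuousOn_projProductPrimitive {a : ℝ} (ha0 : 0 < a) (ha1 : a ≤ 1) :
    ContinuousOn (projProductPrimitive a) (Icc 0 a) := by
  have hmob : ContinuousOn (fun l => √(1 - a) * arcsin (((2 - a) * l - a) / (a * (1 - l))))
      (Icc 0 a) := by
    rcases ha1.eq_or_lt with rfl | ha1
    · simpa using continuousOn_const
    refine continuousOn_const.mul (continuous_arcsin.comp_continuousOn
      (ContinuousOn.div (by fun_prop) (by fun_prop) fun l hl => ?_))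
    have : 0 < a * (1 - l) := mul_pos ha0 (by linarith [hl.2])
    exact this.ne'
  unfold projProductPrimitive
  exact ((continuous_arcsin.comp (by fun_prop)).continuousOn.sub hmob).div_const _

lemma projProductPrimitive_zero {a : ℝ} (ha0 : a ≠ 0) :
    projProductPrimitive a 0 = (√(1 - a) - 1) / 4 := by
  have : ((2 - a) * 0 - a) / (a * (1 - 0)) = -1 := by field_simp; ring
  rw [projProductPrimitive, this]
  simp only [mul_zero, zero_div, zero_sub, arcsin_neg_one]
  field_simp
  ring

lemma projProductPrimitive_self {a : ℝ} (ha0 : a ≠ 0) (ha1 : a ≤ 1) :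
    projProductPrimitive a a = (1 - √(1 - a)) / 4 := by
  have hmob : √(1 - a) * arcsin (((2 - a) * a - a) / (a * (1 - a))) = √(1 - a) * (π / 2) := by
    rcases ha1.eq_or_lt with rfl | ha1
    · simp
    have : ((2 - a) * a - a) / (a * (1 - a)) = 1 := by
      rw [div_eq_one_iff_eq (mul_ne_zero ha0 (by linarith))]; ring
    rw [this, arcsin_one]
  rw [projProductPrimitive, hmob, mul_div_assoc, div_self ha0]
  simp only [mul_one, show (2 : ℝ) - 1 = 1 by norm_num, arcsin_one]
  field_simp
  ring

theorem integral_sqrt_mul_sub_div_two_pi_mul_one_sub {a : ℝ} (ha0 : 0 < a) (ha1 : a ≤ 1) :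
    ∫ l in (0 : ℝ)..a, √(l * (a - l)) / (2 * π * l * (1 - l)) = (1 - √(1 - a)) / 2 := by
  have hderiv : ∀ x ∈ Ioo 0 a,
      HasDerivAt (projProductPrimitive a) (√(x * (a - x)) / (2 * π * x * (1 - x))) x :=
    fun x hx => hasDerivAt_projProductPrimitive hx.1 hx.2 ha1
  have hcont := continuousOn_projProductPrimitive ha0 ha1
  have hint :
      IntervalIntegrable (fun x => √(x * (a - x)) / (2 * π * x * (1 - x))) volume 0 a := by
    refine intervalIntegrable_deriv_of_nonneg (g := projProductPrimitive a) ?_ ?_ ?_ <;>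
      simp only [uIcc_of_le ha0.le, min_eq_left ha0.le, max_eq_right ha0.le]
    · exact hcont
    · exact hderiv
    · intro x ⟨hx0, hxa⟩
      have : 0 < 1 - x := by linarith
      positivity
  rw [integral_eq_sub_of_hasDerivAt_of_le ha0.le hcont hderiv hint,
    projProductPrimitive_self ha0.ne' ha1, projProductPrimitive_zero ha0.ne']
  ring

/-- For every `0 < c < 1`,
`∫₀^{4c(1−c)} √(λ(4c(1−c) − λ)) / (2π λ (1 − λ)) dλ = min(c, 1−c)`. -/
theorem stmt14 (c : ℝ) (hc0 : 0 < c) (hc1 : c < 1) :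
    ∫ l in (0 : ℝ)..(4 * c * (1 - c)),
      Real.sqrt (l * (4 * c * (1 - c) - l)) / (2 * Real.pi * l * (1 - l))
      = min c (1 - c) := by
  have ha0 : 0 < 4 * c * (1 - c) := by nlinarith
  have ha1 : 4 * c * (1 - c) ≤ 1 := by nlinarith [sq_nonneg (2 * c - 1)]
  rw [integral_sqrt_mul_sub_div_two_pi_mul_one_sub ha0 ha1,
    show 1 - 4 * c * (1 - c) = (1 - 2 * c) ^ 2 by ring, sqrt_sq_eq_abs]
  rcases le_total c (1 - c) with h | h
  · rw [min_eq_left h, abs_of_nonneg (by linarith)]; ring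
  · rw [min_eq_right h, abs_of_nonpos (by linarith)]; ring
end

section
/- Let c ∈ (0,1) with c ≠ 1/2. For x ∈ (4c(1−c), 1) define s(x) = √(x·(x − 4c(1−c))) (the nonnegative real square root), t̃(x) = (x − 2(1−c) + s(x)) / (2(1−x)x), t(x) = (x(2c−1) + s(x)) / (2c(1−x)x), and f(x) = x·( t̃(x) / ((1−c)·t(x)) )². Then t(x) ≠ 0 for all x ∈ (4c(1−c), 1), f is strictly increasing on (4c(1−c), 1), f(x) → c/(1−c) as x decreases to 4c(1−c), and as x increases to 1, f(x) → 1 if c < 1/2 while f(x) → (c/(1−c))² if c > 1/2. -/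
/-!
On the interval, the square root `s = √(x(x − 4c(1−c)))` satisfies `s² = x(x − 4c(1−c))`, and
with this relation the rational expression `f` collapses to the closed form
`(x − 2c(1−c) + s) / (2(1−c)²)`. This closed form is continuous and strictly increasing for
`x ≥ 4c(1−c)`, so the limits are its values at the two endpoints; at `x = 1` the square root is
`|1 − 2c|`, which is what separates the cases `c < 1/2` and `c > 1/2`.
-/

open Filter Set Topology

section Tendsto

variable {f g : ℝ → ℝ} {a b : ℝ}

theorem tendsto_nhdsGT_of_eqOn_Ioo (hab : a < b) (hfg : EqOn f g (Ioo a b))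
    (hg : ContinuousAt g a) : Tendsto f (𝓝[>] a) (𝓝 (g a)) :=
  (hg.tendsto.mono_left nhdsWithin_le_nhds).congr'
    (eventuallyEq_of_mem (Ioo_mem_nhdsGT hab) hfg.symm)

theorem tendsto_nhdsLT_of_eqOn_Ioo (hab : a < b) (hfg : EqOn f g (Ioo a b))
    (hg : ContinuousAt g b) : Tendsto f (𝓝[<] b) (𝓝 (g b)) :=
  (hg.tendsto.mono_left nhdsWithin_le_nhds).congr'
    (eventuallyEq_of_mem (Ioo_mem_nhdsLT hab) hfg.symm)

end Tendsto

theorem Real.sq_sqrt_mul_sub_of_le {a x : ℝ} (hax : a ≤ x) (hx : 0 ≤ x) :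
    √(x * (x - a)) ^ 2 = x * (x - a) :=
  Real.sq_sqrt (mul_nonneg hx (sub_nonneg.mpr hax))

theorem ratio_sq_eq_of_sq_eq {K : Type*} [Field K] [CharZero K] {c x s : K}
    (hs : s ^ 2 = x * (x - 4 * c * (1 - c))) (hc1 : 1 - c ≠ 0) (hx1 : 1 - x ≠ 0)
    (hD : x * (2 * c - 1) + s ≠ 0) :
    x * ((x - 2 * (1 - c) + s) / (2 * (1 - x) * x) /
        ((1 - c) * ((x * (2 * c - 1) + s) / (2 * c * (1 - x) * x)))) ^ 2 =
      (x - 2 * c * (1 - c) + s) / (2 * (1 - c) ^ 2) := by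
  field_simp
  linear_combination (-s + 2 * x * c ^ 2 + x + 2 * c - 2 * c ^ 2 - 4 * x * c) * hs

section ClosedForm

variable {c x : ℝ}

theorem mul_two_mul_sub_one_add_sqrt_ne_zero (hc0 : 0 < c) (hc1 : c < 1)
    (hx : x ∈ Ioo (4 * c * (1 - c)) 1) :
    x * (2 * c - 1) + √(x * (x - 4 * c * (1 - c))) ≠ 0 := by
  -- squaring `√(x(x − 4c(1−c))) = x(1 − 2c)` would force `x = 1`
  obtain ⟨hxa, hx1⟩ := hx
  have hx0 : 0 < x := lt_trans (by nlinarith) hxa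
  intro hzero
  have hsq := Real.sq_sqrt_mul_sub_of_le hxa.le hx0.le
  rw [show √(x * (x - 4 * c * (1 - c))) = x * (1 - 2 * c) by linarith] at hsq
  nlinarith [mul_pos (mul_pos (mul_pos hc0 (sub_pos.mpr hc1)) hx0) (sub_pos.mpr hx1)]

noncomputable def fClosedForm (c x : ℝ) : ℝ :=
  (x - 2 * c * (1 - c) + √(x * (x - 4 * c * (1 - c)))) / (2 * (1 - c) ^ 2)

theorem continuous_fClosedForm : Continuous (fClosedForm c) := by
  unfold fClosedForm
  fun_prop

theorem fClosedForm_strictMonoOn (hc0 : 0 ≤ c) (hc1 : c < 1) :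
    StrictMonoOn (fClosedForm c) (Ici (4 * c * (1 - c))) := by
  intro x hx y _ hxy
  have ha : 0 ≤ 4 * c * (1 - c) := by nlinarith
  have hsqrt : √(x * (x - 4 * c * (1 - c))) ≤ √(y * (y - 4 * c * (1 - c))) := by
    apply Real.sqrt_le_sqrt
    nlinarith [mem_Ici.mp hx]
  unfold fClosedForm
  gcongr ?_ / _
  linarith

theorem fClosedForm_left_edge (hc1 : c ≠ 1) : fClosedForm c (4 * c * (1 - c)) = c / (1 - c) := by
  have : 1 - c ≠ 0 := sub_ne_zero.mpr hc1.symm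
  simp only [fClosedForm, sub_self, mul_zero, Real.sqrt_zero]
  field_simp
  ring

theorem fClosedForm_one_of_le (hc : c ≤ 1 / 2) : fClosedForm c 1 = 1 := by
  have : 1 - c ≠ 0 := by intro h; linarith
  rw [fClosedForm, show (1 : ℝ) * (1 - 4 * c * (1 - c)) = (1 - 2 * c) ^ 2 by ring,
    Real.sqrt_sq (by linarith)]
  field_simp
  ring

theorem fClosedForm_one_of_ge (hc : 1 / 2 ≤ c) (hc1 : c ≠ 1) :
    fClosedForm c 1 = (c / (1 - c)) ^ 2 := by
  have : 1 - c ≠ 0 := sub_ne_zero.mpr hc1.symm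
  rw [fClosedForm, show (1 : ℝ) * (1 - 4 * c * (1 - c)) = (2 * c - 1) ^ 2 by ring,
    Real.sqrt_sq (by linarith)]
  field_simp
  ring

end ClosedForm

/-- Let `c ∈ (0,1)`, `c ≠ 1/2`, and for `x ∈ (4c(1−c), 1)` define
`s(x) = √(x(x − 4c(1−c)))`, `t̃(x) = (x − 2(1−c) + s(x))/(2(1−x)x)`,
`t(x) = (x(2c−1) + s(x))/(2c(1−x)x)`, and `f(x) = x (t̃(x)/((1−c)t(x)))²`. Then `t` does not
vanish on `(4c(1−c), 1)`, `f` is strictly increasing there, `f(x) → c/(1−c)` as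
`x ↓ 4c(1−c)`, and as `x ↑ 1`, `f(x) → 1` if `c < 1/2` while `f(x) → (c/(1−c))²` if
`c > 1/2`. -/
theorem stmt16 (c : ℝ) (hc0 : 0 < c) (hc1 : c < 1) (hc : c ≠ 1 / 2)
    (s ttil t f : ℝ → ℝ)
    (hs : ∀ x, s x = Real.sqrt (x * (x - 4 * c * (1 - c))))
    (httil : ∀ x, ttil x = (x - 2 * (1 - c) + s x) / (2 * (1 - x) * x))
    (ht : ∀ x, t x = (x * (2 * c - 1) + s x) / (2 * c * (1 - x) * x))
    (hf : ∀ x, f x = x * (ttil x / ((1 - c) * t x)) ^ 2) :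
    (∀ x ∈ Set.Ioo (4 * c * (1 - c)) 1, t x ≠ 0) ∧
    StrictMonoOn f (Set.Ioo (4 * c * (1 - c)) 1) ∧
    Tendsto f (nhdsWithin (4 * c * (1 - c)) (Set.Ioi (4 * c * (1 - c)))) (nhds (c / (1 - c))) ∧
    (c < 1 / 2 → Tendsto f (nhdsWithin 1 (Set.Iio 1)) (nhds 1)) ∧
    (1 / 2 < c → Tendsto f (nhdsWithin 1 (Set.Iio 1)) (nhds ((c / (1 - c)) ^ 2))) := by
  have ha1 : 4 * c * (1 - c) < 1 := by
    nlinarith [sq_pos_of_ne_zero (sub_ne_zero.mpr hc)]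
  have hpos : ∀ x ∈ Ioo (4 * c * (1 - c)) 1, 0 < x ∧ 0 < 1 - x := fun x hx =>
    ⟨lt_trans (by nlinarith) hx.1, sub_pos.mpr hx.2⟩
  have hfg : EqOn f (fClosedForm c) (Ioo (4 * c * (1 - c)) 1) := fun x hx => by
    rw [hf, httil, ht, hs, fClosedForm]
    exact ratio_sq_eq_of_sq_eq (Real.sq_sqrt_mul_sub_of_le hx.1.le (hpos x hx).1.le)
      (sub_pos.mpr hc1).ne' (hpos x hx).2.ne' (mul_two_mul_sub_one_add_sqrt_ne_zero hc0 hc1 hx)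
  refine ⟨fun x hx => ?_, ?_, ?_, fun hlt => ?_, fun hgt => ?_⟩
  · obtain ⟨hx0, hx1⟩ := hpos x hx
    rw [ht, hs]
    exact div_ne_zero (mul_two_mul_sub_one_add_sqrt_ne_zero hc0 hc1 hx) (by positivity)
  · exact ((fClosedForm_strictMonoOn hc0.le hc1).mono
      (Ioo_subset_Ioi_self.trans Ioi_subset_Ici_self)).congr hfg.symm
  · rw [← fClosedForm_left_edge hc1.ne]
    exact tendsto_nhdsGT_of_eqOn_Ioo ha1 hfg continuous_fClosedForm.continuousAt
  · simpa only [fClosedForm_one_of_le hlt.le] using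
      tendsto_nhdsLT_of_eqOn_Ioo ha1 hfg continuous_fClosedForm.continuousAt
  · simpa only [fClosedForm_one_of_ge hgt.le hc1.ne] using
      tendsto_nhdsLT_of_eqOn_Ioo ha1 hfg continuous_fClosedForm.continuousAt
end
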